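/- Let d ≥ 3 and let n ≥ 2 satisfy (1 − 1/d)^n < 1/2. Let a_0, …, a_{d−3} ∈ ℂ, let p(z) = z^{d−1} + a_{d−3} z^{d−3} + ⋯ + a_1 z + a_0, and let f = [Y·P(X,Y) : Y^d] ∈ ℙ^{2d+1}, where P(X,Y) = Y^{d−1} p(X/Y) is the degree-(d−1) homogenization of p. Then f ∈ U_n: namely f is semistable, f ∉ I(d), and f^n is not semistable. Moreover, H_f = Y, the only hole of f is ∞ = [1:0] with d_∞(f) = 1, f̂ = p fixes ∞, and d_∞(f^n) = dⁿ − (d−1)ⁿ ≥ dⁿ/2. -/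

import Mathlib

open MvPolynomial Filter Topology
open scoped Classical

noncomputable section

/-- Binary forms: polynomials in `X 0, X 1` over `ℂ`. A pair of homogeneous elements of
degree `d`, not both zero, represents a point of `ℙ^{2d+1}`. -/
abbrev MP : Type := MvPolynomial (Fin 2) ℂ

noncomputable instance : NormalizationMonoid MP :=
  UniqueFactorizationMonoid.strongNormalizationMonoid.toNormalizationMonoid

noncomputable instance : NormalizedGCDMonoid MP :=
  UniqueFactorizationMonoid.toNormalizedGCDMonoid MP

/-- The complex projective line `ℙ¹(ℂ)`. -/
abbrev P1 : Type := Projectivization ℂ (Fin 2 → ℂ)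

/-- A linear form vanishing exactly at the projective point `z`. -/
noncomputable def linForm (z : P1) : MP :=
  C (z.rep 1) * X 0 - C (z.rep 0) * X 1

/-- Multiplicity of `z` as a zero of the binary form `H`. -/
noncomputable def rootMult (H : MP) (z : P1) : ℕ :=
  sSup {k : ℕ | linForm z ^ k ∣ H}

/-- `H_f = gcd(P, Q)` for `f = [P : Q]`. -/
noncomputable def Hgcd (f : MP × MP) : MP := gcd f.1 f.2

/-- The depth `d_z(f)` of `z` as a hole of `f`: multiplicity of `z` as a zero of `H_f`. -/
noncomputable def depthP (f : MP × MP) (z : P1) : ℕ := rootMult (Hgcd f) z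

/-- `z` is a hole of `f`, i.e. a zero of `H_f`. -/
def IsHole (f : MP × MP) (z : P1) : Prop := linForm z ∣ Hgcd f

/-- The induced map `f̂ = [P / H_f : Q / H_f]` as a pair of binary forms. -/
noncomputable def fhat (f : MP × MP) : MP × MP :=
  ((dvd_def.mp (gcd_dvd_left f.1 f.2)).choose,
   (dvd_def.mp (gcd_dvd_right f.1 f.2)).choose)

/-- A pair of binary forms acting as a self-map of `ℙ¹` (junk value `z` where undefined). -/
noncomputable def apply₁ (g : MP × MP) (z : P1) : P1 :=
  if h : (![eval z.rep g.1, eval z.rep g.2] : Fin 2 → ℂ) ≠ 0 then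
    Projectivization.mk ℂ _ h
  else z

/-- The induced map `f̂` as a self-map of `ℙ¹`. -/
noncomputable def fhatFun (f : MP × MP) : P1 → P1 := apply₁ (fhat f)

/-- The induced map of `f` is constant. -/
def ConstHat (f : MP × MP) : Prop := ∃ c : P1, ∀ z : P1, fhatFun f z = c

/-- Local multiplicity `m_z(g)` of the rational map `[g.1 : g.2]` at `z`
(equal to `0` when the map is constant). -/
noncomputable def multAt (g : MP × MP) (z : P1) : ℕ :=
  rootMult (C (eval z.rep g.2) * g.1 - C (eval z.rep g.1) * g.2) z

/-- Local multiplicity `m_z(f̂)` of the induced map of `f` at `z`. -/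
noncomputable def hatMult (f : MP × MP) (z : P1) : ℕ := multAt (fhat f) z

/-- Composition of pairs of binary forms (homogeneous representatives). -/
noncomputable def comp2 (f g : MP × MP) : MP × MP :=
  (aeval ![g.1, g.2] f.1, aeval ![g.1, g.2] f.2)

/-- The iterate `f^n` as a pair of binary forms (canonical homogeneous representative). -/
noncomputable def iterPair (f : MP × MP) : ℕ → MP × MP
  | 0 => (X 0, X 1)
  | n + 1 => comp2 f (iterPair f n)

/-- GIT semistability of a degree-`d` point `f` of `ℙ^{2d+1}`. -/
def Semistable (d : ℕ) (f : MP × MP) : Prop :=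
  (∀ z : P1, (depthP f z : ℚ) ≤ ((d : ℚ) + 1) / 2) ∧
  ∀ h : P1, (d : ℚ) / 2 ≤ (depthP f h : ℚ) → fhatFun f h ≠ h

/-- GIT stability of a degree-`d` point `f` of `ℙ^{2d+1}`. -/
def Stable (d : ℕ) (f : MP × MP) : Prop :=
  (∀ z : P1, (depthP f z : ℚ) ≤ (d : ℚ) / 2) ∧
  ∀ h : P1, ((d : ℚ) - 1) / 2 ≤ (depthP f h : ℚ) → fhatFun f h ≠ h

/-- The indeterminacy locus `I(d)`: the induced map is a constant `c` which is a hole. -/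
def Idet (f : MP × MP) : Prop :=
  ∃ c : P1, (∀ z : P1, fhatFun f z = c) ∧ IsHole f c

/-- The set `U_n` of `n`-unstable maps. -/
def Unstable (d n : ℕ) (f : MP × MP) : Prop :=
  Semistable d f ∧ ¬ Idet f ∧ ¬ Semistable (d ^ n) (iterPair f n)

/-- `f` is a representative of a point of `ℙ^{2d+1}`: a pair of homogeneous binary
forms of degree `d`, not both zero. -/
def IsRatRep (d : ℕ) (f : MP × MP) : Prop :=
  f.1.IsHomogeneous d ∧ f.2.IsHomogeneous d ∧ f ≠ 0

/-- Projective equality of pairs of binary forms. -/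
def ProjEq (f g : MP × MP) : Prop := ∃ c : ℂ, c ≠ 0 ∧ g = (C c * f.1, C c * f.2)

/-- The point `∞ = [1 : 0]` of `ℙ¹`. -/
noncomputable def infty : P1 :=
  Projectivization.mk ℂ ![1, 0] (by
    intro h
    simpa using congrFun h 0)

/-- The point `[a : 1]` of `ℙ¹`. -/
noncomputable def ptc (a : ℂ) : P1 :=
  Projectivization.mk ℂ ![a, 1] (by
    intro h
    simpa using congrFun h 1)

/-- The degree of a pair of binary forms. -/
def pairDeg (g : MP × MP) : ℕ := max g.1.totalDegree g.2.totalDegree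

end

/-!
Write `Y = X 1` and `e = dⁿ − (d−1)ⁿ`. By induction `fⁿ = [Yᵉ S : Y^{dⁿ}]` with `S(∞) ≠ 0`:
substituting `[Yᵉ S : Y^{dⁿ}] = Yᵉ • [S : Y^{(d−1)ⁿ}]` into the form `P` of degree `d − 1`
pulls out `Y^{e(d−1)}` and leaves `P(S, Y^{(d−1)ⁿ})`, whose value at `∞` is `P(S(∞), 0) ≠ 0`.
For a pair `[Yᵉ S : Y^{e+k}]` with `S(∞) ≠ 0` the gcd is `Yᵉ` up to a unit, so `∞` is the only
hole, of depth `e`, and the induced map `[S : Yᵏ]` fixes `∞` when `k > 0`. For `f` itself the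
hole has depth `1`, harmless since `d ≥ 3`; for `fⁿ`, `(1 − 1/d)ⁿ < 1/2` gives `e ≥ dⁿ/2`, so
the fixed hole `∞` makes `fⁿ` unstable.
-/

theorem MvPolynomial.IsHomogeneous.aeval_smul {σ R S : Type*} [CommSemiring R] [CommSemiring S]
    [Algebra R S] {φ : MvPolynomial σ R} {m : ℕ} (hφ : φ.IsHomogeneous m) (u : S) (x : σ → S) :
    MvPolynomial.aeval (u • x) φ = u ^ m * MvPolynomial.aeval x φ := by
  simp only [aeval_eq_eval₂Hom, coe_eval₂Hom, eval₂_eq, Finset.mul_sum]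
  refine Finset.sum_congr rfl fun s hs => ?_
  simp only [Pi.smul_apply, smul_eq_mul, mul_pow, Finset.prod_mul_distrib,
    Finset.prod_pow_eq_pow_sum, ← hφ.degree_eq_sum_deg_support hs]
  ring

theorem MvPolynomial.eval_aeval {σ τ R : Type*} [CommSemiring R] (v : τ → R)
    (w : σ → MvPolynomial τ R) (φ : MvPolynomial σ R) :
    eval v (aeval w φ) = eval (fun i => eval v (w i)) φ := by
  rw [aeval_eq_bind₁]
  exact eval₂Hom_bind₁ _ _ _ _

lemma Associated.exists_eq_C_mul {p q : MP} (h : Associated p q) :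
    ∃ c : ℂ, c ≠ 0 ∧ p = C c * q := by
  obtain ⟨u, hu⟩ := h.symm
  obtain ⟨c, hc, hcu⟩ := isUnit_iff_eq_C_of_isReduced.mp u.isUnit
  exact ⟨c, hc.ne_zero, by rw [← hu, hcu, mul_comm]⟩

lemma mk_eq_infty_iff {v : Fin 2 → ℂ} (hv : v ≠ 0) :
    Projectivization.mk ℂ v hv = infty ↔ v 1 = 0 := by
  rw [infty, Projectivization.mk_eq_mk_iff']
  constructor
  · rintro ⟨a, rfl⟩
    simp
  · intro h
    exact ⟨v 0, by ext i; fin_cases i <;> simp [h]⟩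

lemma eq_infty_iff (z : P1) : z = infty ↔ z.rep 1 = 0 := by
  conv_lhs => rw [← Projectivization.mk_rep z]
  exact mk_eq_infty_iff _

lemma infty_rep_one : infty.rep 1 = 0 :=
  (eq_infty_iff infty).mp rfl

lemma infty_rep_eq : infty.rep = ![infty.rep 0, 0] := by
  ext i
  fin_cases i
  · rfl
  · exact infty_rep_one

lemma infty_rep_zero_ne_zero : infty.rep 0 ≠ 0 := by
  intro h
  exact infty.rep_nonzero (by rw [infty_rep_eq, h]; ext i; fin_cases i <;> rfl)

lemma ptc_ne_infty (a : ℂ) : ptc a ≠ infty := by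
  rw [ptc, Ne, mk_eq_infty_iff]
  simp

lemma eval_rep_eq_zero_of_linForm_dvd {z : P1} {Q : MP} (h : linForm z ∣ Q) :
    eval z.rep Q = 0 := by
  obtain ⟨R, rfl⟩ := h
  simp only [linForm, map_mul, map_sub, eval_C, eval_X]
  ring

lemma eq_infty_of_linForm_dvd_X_one_pow {z : P1} {e : ℕ} (h : linForm z ∣ X 1 ^ e) :
    z = infty := by
  have := eval_rep_eq_zero_of_linForm_dvd h
  rw [map_pow, eval_X] at this
  exact (eq_infty_iff z).mpr (pow_eq_zero_iff'.mp this).1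

lemma associated_linForm_infty : Associated (linForm infty) (X 1) := by
  have h : linForm infty = C (-infty.rep 0) * X 1 := by
    rw [linForm, infty_rep_one]
    simp
  rw [h]
  exact associated_unit_mul_left _ _ ((neg_ne_zero.mpr infty_rep_zero_ne_zero).isUnit.map C)

lemma rootMult_C_mul_X_one_pow {c : ℂ} (hc : c ≠ 0) (e : ℕ) (z : P1) :
    rootMult (C c * X 1 ^ e) z = if z = infty then e else 0 := by
  have hunit : IsUnit (C c : MP) := hc.isUnit.map C
  simp only [rootMult, hunit.dvd_mul_left]
  split_ifs with hz
  · subst hz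
    simp only [(associated_linForm_infty.pow_pow).dvd_iff_dvd_left,
      pow_dvd_pow_iff X_prime.ne_zero X_prime.not_isUnit]
    exact csSup_Iic
  · have : {k : ℕ | linForm z ^ k ∣ X 1 ^ e} = {0} := by
      ext k
      refine ⟨fun hk => ?_, fun hk => by simp [Set.mem_singleton_iff.mp hk]⟩
      by_contra hk0
      exact hz (eq_infty_of_linForm_dvd_X_one_pow ((dvd_pow_self _ hk0).trans hk))
    rw [this, csSup_singleton]

lemma apply₁_eq_of_projEq {g g' : MP × MP} (h : ProjEq g g') : apply₁ g' = apply₁ g := by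
  obtain ⟨c, hc, rfl⟩ := h
  funext z
  set v : Fin 2 → ℂ := ![eval z.rep g.1, eval z.rep g.2]
  have hv : (![eval z.rep (C c * g.1), eval z.rep (C c * g.2)] : Fin 2 → ℂ) = c • v := by
    ext i; fin_cases i <;> simp [v]
  unfold apply₁
  simp only [hv]
  by_cases h0 : v = 0
  · rw [dif_neg (by simp [h0]), dif_neg (not_not.mpr h0)]
  · rw [dif_pos (by simpa [smul_eq_zero, hc] using h0), dif_pos h0, Projectivization.mk_eq_mk_iff']
    exact ⟨c, rfl⟩

lemma apply₁_eq_infty_iff {g : MP × MP} {z : P1} (h : eval z.rep g.1 ≠ 0 ∨ eval z.rep g.2 ≠ 0) :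
    apply₁ g z = infty ↔ eval z.rep g.2 = 0 := by
  have hv : (![eval z.rep g.1, eval z.rep g.2] : Fin 2 → ℂ) ≠ 0 := by
    intro h0
    rcases h with h | h
    · exact h (by simpa using congrFun h0 0)
    · exact h (by simpa using congrFun h0 1)
  rw [apply₁, dif_pos hv, mk_eq_infty_iff]
  rfl

lemma Hgcd_mul_fhat (f : MP × MP) :
    f.1 = Hgcd f * (fhat f).1 ∧ f.2 = Hgcd f * (fhat f).2 :=
  ⟨(dvd_def.mp (gcd_dvd_left f.1 f.2)).choose_spec,
    (dvd_def.mp (gcd_dvd_right f.1 f.2)).choose_spec⟩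

lemma associated_gcd_X_one_pow_mul {S : MP} (hS : ¬ X 1 ∣ S) (e k : ℕ) :
    Associated (gcd (X 1 ^ e * S) (X 1 ^ (e + k))) (X 1 ^ e) := by
  have hunit : IsUnit (gcd S (X 1 ^ k)) :=
    gcd_isUnit_iff_isRelPrime.mpr (X_prime.irreducible.isRelPrime_iff_not_dvd.mpr hS).pow_left.symm
  rw [pow_add]
  exact (gcd_mul_left' _ _ _).trans (associated_mul_unit_left _ _ hunit)

lemma not_X_one_dvd_of_eval_infty_ne_zero {S : MP} (hS : eval infty.rep S ≠ 0) : ¬ X 1 ∣ S := by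
  rintro ⟨M, rfl⟩
  simp [infty_rep_one] at hS

lemma exists_Hgcd_X_one_pow_mul {S : MP} (hS : eval infty.rep S ≠ 0) (e k : ℕ) :
    ∃ c : ℂ, c ≠ 0 ∧ Hgcd (X 1 ^ e * S, X 1 ^ (e + k)) = C c * X 1 ^ e :=
  (associated_gcd_X_one_pow_mul (not_X_one_dvd_of_eval_infty_ne_zero hS) e k).exists_eq_C_mul

lemma depthP_X_one_pow_mul {S : MP} (hS : eval infty.rep S ≠ 0) (e k : ℕ) (z : P1) :
    depthP (X 1 ^ e * S, X 1 ^ (e + k)) z = if z = infty then e else 0 := by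
  obtain ⟨c, hc, hH⟩ := exists_Hgcd_X_one_pow_mul hS e k
  rw [depthP, hH, rootMult_C_mul_X_one_pow hc]

lemma eq_infty_of_isHole_X_one_pow_mul {S : MP} (hS : eval infty.rep S ≠ 0) {e k : ℕ} {z : P1}
    (h : IsHole (X 1 ^ e * S, X 1 ^ (e + k)) z) : z = infty := by
  obtain ⟨c, hc, hH⟩ := exists_Hgcd_X_one_pow_mul hS e k
  rw [IsHole, hH, (hc.isUnit.map C).dvd_mul_left] at h
  exact eq_infty_of_linForm_dvd_X_one_pow h

lemma projEq_fhat_X_one_pow_mul {S : MP} (hS : eval infty.rep S ≠ 0) (e k : ℕ) :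
    ProjEq (S, X 1 ^ k) (fhat (X 1 ^ e * S, X 1 ^ (e + k))) := by
  obtain ⟨c, hc, hH⟩ := exists_Hgcd_X_one_pow_mul hS e k
  obtain ⟨h1, h2⟩ := Hgcd_mul_fhat (X 1 ^ e * S, X 1 ^ (e + k))
  rw [hH] at h1 h2
  have hG : (C c * X 1 ^ e : MP) ≠ 0 := mul_ne_zero (by simpa using hc) (pow_ne_zero _ (X_ne_zero 1))
  have hcancel (p : MP) : C c * X 1 ^ e * (C c⁻¹ * p) = X 1 ^ e * p := by
    rw [show C c * X 1 ^ e * (C c⁻¹ * p) = C (c * c⁻¹) * (X 1 ^ e * p) by rw [C_mul]; ring,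
      mul_inv_cancel₀ hc, C_1, one_mul]
  refine ⟨c⁻¹, inv_ne_zero hc, Prod.ext (mul_left_cancel₀ hG ?_) (mul_left_cancel₀ hG ?_)⟩
  · rw [← h1, hcancel]
  · rw [← h2, hcancel, ← pow_add]

lemma fhatFun_X_one_pow_mul {S : MP} (hS : eval infty.rep S ≠ 0) (e k : ℕ) :
    fhatFun (X 1 ^ e * S, X 1 ^ (e + k)) = apply₁ (S, X 1 ^ k) :=
  apply₁_eq_of_projEq (projEq_fhat_X_one_pow_mul hS e k)

lemma fhatFun_X_one_pow_mul_infty {S : MP} (hS : eval infty.rep S ≠ 0) (e : ℕ) {k : ℕ}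
    (hk : k ≠ 0) : fhatFun (X 1 ^ e * S, X 1 ^ (e + k)) infty = infty := by
  rw [fhatFun_X_one_pow_mul hS, apply₁_eq_infty_iff (Or.inl hS)]
  simp [infty_rep_one, hk]

lemma not_idet_X_one_pow_mul {S : MP} (hS : eval infty.rep S ≠ 0) (e k : ℕ) :
    ¬ Idet (X 1 ^ e * S, X 1 ^ (e + k)) := by
  rintro ⟨c, hconst, hhole⟩
  have hne : eval (ptc 0).rep (X 1 ^ k) ≠ 0 := by
    rw [map_pow, eval_X]
    exact pow_ne_zero _ ((eq_infty_iff (ptc 0)).not.mp (ptc_ne_infty 0))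
  have h := hconst (ptc 0)
  rw [eq_infty_of_isHole_X_one_pow_mul hS hhole, fhatFun_X_one_pow_mul hS] at h
  exact hne ((apply₁_eq_infty_iff (g := (S, X 1 ^ k)) (Or.inr hne)).mp h)

theorem exists_iterPair_eq {d : ℕ} (hd : 2 ≤ d) {P : MP} (hP : P.IsHomogeneous (d - 1))
    (hP0 : ∀ x : ℂ, x ≠ 0 → eval ![x, 0] P ≠ 0) (n : ℕ) :
    ∃ e S, e + (d - 1) ^ n = d ^ n ∧ eval infty.rep S ≠ 0 ∧
      iterPair (X 1 * P, X 1 ^ d) n = (X 1 ^ e * S, X 1 ^ d ^ n) := by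
  induction n with
  | zero => exact ⟨0, X 0, by simp, by simpa using infty_rep_zero_ne_zero, by simp [iterPair]⟩
  | succ n ih =>
    obtain ⟨e, S, he, hS, hiter⟩ := ih
    refine ⟨d ^ n + e * (d - 1), aeval ![S, X 1 ^ (d - 1) ^ n] P, ?_, ?_, ?_⟩
    · obtain ⟨m, rfl⟩ : ∃ m, d = m + 1 := ⟨d - 1, by omega⟩
      simp only [Nat.add_sub_cancel] at he ⊢
      linear_combination m * he
    · have hw : (fun i => eval infty.rep (![S, X 1 ^ (d - 1) ^ n] i)) =
          ![eval infty.rep S, 0] := by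
        ext i
        fin_cases i
        · rfl
        · simp [infty_rep_one, show d - 1 ≠ 0 by omega]
      rw [eval_aeval, hw]
      exact hP0 _ hS
    · have hP' : aeval ![X 1 ^ e * S, X 1 ^ d ^ n] P =
          X 1 ^ (e * (d - 1)) * aeval ![S, X 1 ^ (d - 1) ^ n] P := by
        have hv : ![X 1 ^ e * S, X 1 ^ d ^ n] = (X 1 ^ e : MP) • ![S, X 1 ^ (d - 1) ^ n] := by
          rw [← he, pow_add]
          ext1 i
          fin_cases i <;> simp
        rw [hv, hP.aeval_smul, pow_mul]
      rw [iterPair, hiter, comp2]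
      simp only [map_mul, map_pow, aeval_X, hP', Matrix.cons_val_one, Matrix.cons_val_zero]
      rw [pow_add, mul_assoc, pow_succ d n, ← pow_mul]

noncomputable def monicCenteredForm (d : ℕ) (a : ℕ → ℂ) : MP :=
  X 0 ^ (d - 1) + ∑ i ∈ Finset.range (d - 2), C (a i) * X 0 ^ i * X 1 ^ (d - 1 - i)

lemma isHomogeneous_monicCenteredForm (d : ℕ) (a : ℕ → ℂ) :
    (monicCenteredForm d a).IsHomogeneous (d - 1) := by
  refine (isHomogeneous_X_pow _ _).add (IsHomogeneous.sum _ _ _ fun i hi => ?_)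
  have hi : i + (d - 1 - i) = d - 1 := by have := Finset.mem_range.mp hi; omega
  simpa [hi] using ((isHomogeneous_C _ (a i)).mul (isHomogeneous_X_pow 0 i)).mul
    (isHomogeneous_X_pow 1 (d - 1 - i))

lemma eval_monicCenteredForm (d : ℕ) (a : ℕ → ℂ) (x : ℂ) :
    eval ![x, 0] (monicCenteredForm d a) = x ^ (d - 1) := by
  simp only [monicCenteredForm, map_add, map_sum, map_mul, map_pow, eval_X, eval_C]
  rw [Finset.sum_eq_zero fun i hi => ?_, add_zero]
  · rfl
  · have := Finset.mem_range.mp hi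
    simp [show d - 1 - i ≠ 0 by omega]

lemma half_pow_le_pow_sub_pow {d n : ℕ} (hd : 1 ≤ d) (h : (1 - 1 / (d : ℚ)) ^ n < 1 / 2) :
    (d : ℚ) ^ n / 2 ≤ ((d ^ n - (d - 1) ^ n : ℕ) : ℚ) := by
  have hd0 : (0 : ℚ) < d := by exact_mod_cast hd
  rw [one_sub_div hd0.ne', div_pow, div_lt_iff₀ (by positivity)] at h
  rw [Nat.cast_sub (Nat.pow_le_pow_left (Nat.sub_le d 1) n)]
  push_cast [Nat.cast_sub hd]
  linarith

lemma semistable_of_depthP_le_one {d : ℕ} (hd : 3 ≤ d) {f : MP × MP}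
    (h : ∀ z, depthP f z ≤ 1) : Semistable d f := by
  have hd' : (3 : ℚ) ≤ d := by exact_mod_cast hd
  have h' (z : P1) : (depthP f z : ℚ) ≤ 1 := by exact_mod_cast h z
  exact ⟨fun z => by linarith [h' z], fun z hz => ((by linarith [h' z]) : False).elim⟩

theorem statement16_general (d n : ℕ) (hd : 3 ≤ d)
    (hsmall : (1 - 1 / (d : ℚ)) ^ n < 1 / 2) (a : ℕ → ℂ) :
    ∀ Pp : MP, ∀ f : MP × MP,
      Pp = X 0 ^ (d - 1) +
        ∑ i ∈ Finset.range (d - 2), C (a i) * X 0 ^ i * X 1 ^ (d - 1 - i) →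
      f = ((X 1 * Pp : MP), (X 1 ^ d : MP)) →
      Unstable d n f ∧
      (∃ c : ℂ, c ≠ 0 ∧ Hgcd f = C c * X 1) ∧
      depthP f infty = 1 ∧
      (∀ z : P1, IsHole f z → z = infty) ∧
      ProjEq (Pp, (X 1 ^ (d - 1) : MP)) (fhat f) ∧
      fhatFun f infty = infty ∧
      depthP (iterPair f n) infty = d ^ n - (d - 1) ^ n ∧
      (d : ℚ) ^ n / 2 ≤ ((d ^ n - (d - 1) ^ n : ℕ) : ℚ) := by
  intro Pp f hPp hf
  replace hPp : Pp = monicCenteredForm d a := hPp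
  have hP0 (x : ℂ) (hx : x ≠ 0) : eval ![x, 0] Pp ≠ 0 := by
    rw [hPp, eval_monicCenteredForm]
    exact pow_ne_zero _ hx
  have hPinf : eval infty.rep Pp ≠ 0 := infty_rep_eq ▸ hP0 _ infty_rep_zero_ne_zero
  obtain ⟨e, S, he, hS, hiter⟩ := exists_iterPair_eq (by omega : 2 ≤ d)
    (hPp ▸ isHomogeneous_monicCenteredForm d a) hP0 n
  have hf1 : f = (X 1 ^ 1 * Pp, X 1 ^ (1 + (d - 1))) := by
    rw [hf, pow_one, Nat.add_sub_cancel' (by omega : 1 ≤ d)]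
  rw [← hf, ← he, hf1] at hiter
  have hdepthn : depthP (iterPair f n) infty = e := by
    rw [hf1, hiter, depthP_X_one_pow_mul hS, if_pos rfl]
  subst hf1
  have hnum := half_pow_le_pow_sub_pow (by omega : 1 ≤ d) hsmall
  rw [show d ^ n - (d - 1) ^ n = e by omega] at hnum ⊢
  have hdepth := depthP_X_one_pow_mul hPinf 1 (d - 1)
  obtain ⟨c, hc, hH⟩ := exists_Hgcd_X_one_pow_mul hPinf 1 (d - 1)
  refine ⟨⟨semistable_of_depthP_le_one hd fun z => ?_, not_idet_X_one_pow_mul hPinf 1 (d - 1),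
    fun hss => hss.2 infty ?_ ?_⟩, ⟨c, hc, by rw [hH, pow_one]⟩, by rw [hdepth, if_pos rfl],
    fun z => eq_infty_of_isHole_X_one_pow_mul hPinf, projEq_fhat_X_one_pow_mul hPinf 1 (d - 1),
    fhatFun_X_one_pow_mul_infty hPinf 1 (by omega), hdepthn, hnum⟩
  · rw [hdepth]
    split_ifs <;> simp
  · rw [hdepthn]
    exact_mod_cast hnum
  · rw [hiter]
    exact fhatFun_X_one_pow_mul_infty hS e (pow_ne_zero _ (by omega))

/-- for `(1 − 1/d)^n < 1/2`, every map `f = [Y·P(X,Y) : Y^d]` with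
`P` the homogenization of `p(z) = z^{d−1} + a_{d−3}z^{d−3} + ⋯ + a_0` is `n`-unstable;
`H_f = Y`, the only hole is `∞` with depth `1`, `f̂ = p` fixes `∞`, and
`d_∞(f^n) = dⁿ − (d−1)ⁿ ≥ dⁿ/2`. -/
theorem statement16 (d n : ℕ) (hd : 3 ≤ d) (hn : 2 ≤ n)
    (hsmall : (1 - 1 / (d : ℚ)) ^ n < 1 / 2) (a : ℕ → ℂ) :
    ∀ Pp : MP, ∀ f : MP × MP,
      Pp = X 0 ^ (d - 1) +
        ∑ i ∈ Finset.range (d - 2), C (a i) * X 0 ^ i * X 1 ^ (d - 1 - i) →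
      f = ((X 1 * Pp : MP), (X 1 ^ d : MP)) →
      Unstable d n f ∧
      (∃ c : ℂ, c ≠ 0 ∧ Hgcd f = C c * X 1) ∧
      depthP f infty = 1 ∧
      (∀ z : P1, IsHole f z → z = infty) ∧
      ProjEq (Pp, (X 1 ^ (d - 1) : MP)) (fhat f) ∧
      fhatFun f infty = infty ∧
      depthP (iterPair f n) infty = d ^ n - (d - 1) ^ n ∧
      (d : ℚ) ^ n / 2 ≤ ((d ^ n - (d - 1) ^ n : ℕ) : ℚ) :=
  statement16_general d n hd hsmall a
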